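/- arXiv:hep-lat/9806030 — 2 statements merged into one kernel-verified Lean document; each statement's English description precedes it below -/
import Mathlib

section
/- Griffiths' first inequality for a finite Z(2) spin system: let Λ be a finite set, and for each subset A ⊆ Λ let J_A ≥ 0. Define the probability weight on configurations σ ∈ {±1}^Λ proportional to exp(∑_A J_A σ_A), where σ_A = ∏_{i∈A} σ_i. Then for every subset B ⊆ Λ, the expectation ⟨σ_B⟩ ≥ 0. -/
open Finset symmDiff

/-- The spin product σ_A = ∏_{i∈A} σ_i for a ±1 configuration given by σ : Λ → Bool. -/
def spinProd {Λ : Type*} (σ : Λ → Bool) (A : Finset Λ) : ℝ :=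
  ∏ i ∈ A, (if σ i then (1 : ℝ) else -1)

/-- The energy (minus the Hamiltonian) ∑_A J_A σ_A of a configuration. -/
def spinEnergy {Λ : Type*} [Fintype Λ] [DecidableEq Λ]
    (J : Finset Λ → ℝ) (σ : Λ → Bool) : ℝ :=
  ∑ A : Finset Λ, J A * spinProd σ A

section aux

variable {Λ : Type*} [DecidableEq Λ]

lemma spinProd_sq (σ : Λ → Bool) (A : Finset Λ) : spinProd σ A * spinProd σ A = 1 := by
  unfold spinProd
  rw [← Finset.prod_mul_distrib]
  apply Finset.prod_eq_one
  intro i _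
  by_cases h : σ i <;> simp [h]

lemma spinProd_pm (σ : Λ → Bool) (A : Finset Λ) : spinProd σ A = 1 ∨ spinProd σ A = -1 :=
  mul_self_eq_one_iff.mp (spinProd_sq σ A)

lemma spinProd_symmDiff (σ : Λ → Bool) (A A' : Finset Λ) :
    spinProd σ A * spinProd σ A' = spinProd σ (A ∆ A') := by
  have h1 : spinProd σ (A ∪ A') * spinProd σ (A ∩ A') = spinProd σ A * spinProd σ A' :=
    Finset.prod_union_inter
  have h2 : (A ∆ A') ∪ (A ∩ A') = A ∪ A' := symmDiff_sup_inf A A'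
  have h3 : Disjoint (A ∆ A') (A ∩ A') := disjoint_symmDiff_inf A A'
  have h4 : spinProd σ (A ∪ A') = spinProd σ (A ∆ A') * spinProd σ (A ∩ A') := by
    rw [← h2]; exact Finset.prod_union h3
  rw [← h1, h4, mul_assoc, spinProd_sq, mul_one]

local instance : Std.Commutative (α := Finset Λ) (· ∆ ·) := ⟨symmDiff_comm⟩
local instance : Std.Associative (α := Finset Λ) (· ∆ ·) := ⟨symmDiff_assoc⟩

lemma spinProd_fold (σ : Λ → Bool) (B : Finset Λ) (S : Finset (Finset Λ)) :
    spinProd σ B * ∏ A ∈ S, spinProd σ A = spinProd σ (S.fold (· ∆ ·) B id) := by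
  induction S using Finset.induction with
  | empty => simp
  | @insert A S hA ih =>
    rw [Finset.prod_insert hA, Finset.fold_insert hA, ← spinProd_symmDiff,
      show spinProd σ B * (spinProd σ A * ∏ A ∈ S, spinProd σ A)
        = spinProd σ A * (spinProd σ B * ∏ A ∈ S, spinProd σ A) by ring, ih]
    rfl
  
lemma sum_spinProd_nonneg [Fintype Λ] (C : Finset Λ) :
    0 ≤ ∑ σ : Λ → Bool, spinProd σ C := by
  rcases C.eq_empty_or_nonempty with rfl | ⟨i, hi⟩
  · simp [spinProd]

  · -- flipping coordinate i negates the spin product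
    have hflip : ∀ σ : Λ → Bool,
        spinProd (Function.update σ i (!σ i)) C = - spinProd σ C := by
      intro σ
      have hC : C = insert i (C.erase i) := (Finset.insert_erase hi).symm
      rw [hC]
      rw [spinProd, spinProd, Finset.prod_insert (Finset.notMem_erase i C),
        Finset.prod_insert (Finset.notMem_erase i C)]
      have h1 : (∏ j ∈ C.erase i, (if (Function.update σ i (!σ i)) j then (1:ℝ) else -1))
          = ∏ j ∈ C.erase i, (if σ j then (1:ℝ) else -1) := by
        apply Finset.prod_congr rfl
        intro j hj
        rw [Function.update_of_ne (Finset.ne_of_mem_erase hj)]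
      rw [h1, Function.update_self]
      cases h : σ i <;> simp <;> ring
    have hinv : Function.Involutive (fun σ : Λ → Bool => Function.update σ i (!σ i)) := by
      intro σ
      simp [Function.update_idem]
    let e := hinv.toPerm
    have hsum : ∑ σ : Λ → Bool, spinProd σ C
        = ∑ σ : Λ → Bool, spinProd (e σ) C := (Equiv.sum_comp e _).symm
    have this' : ∑ σ : Λ → Bool, spinProd (e σ) C = - ∑ σ : Λ → Bool, spinProd σ C := by
      rw [← Finset.sum_neg_distrib]
      refine Finset.sum_congr rfl fun σ _ => ?_
      have he : e σ = Function.update σ i (!σ i) := rfl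
      rw [he, hflip σ]
    have h0 : ∑ σ : Λ → Bool, spinProd σ C = 0 := by linarith [hsum.trans this']
    rw [h0]

end aux

/-- Griffiths' first inequality: for a finite Z(2) spin system with nonnegative
couplings J_A ≥ 0, the Gibbs expectation of any spin product σ_B is nonnegative. -/
theorem griffiths_first {Λ : Type*} [Fintype Λ] [DecidableEq Λ]
    (J : Finset Λ → ℝ) (hJ : ∀ A, 0 ≤ J A) (B : Finset Λ) :
    0 ≤ (∑ σ : Λ → Bool, spinProd σ B * Real.exp (spinEnergy J σ)) /
        (∑ σ : Λ → Bool, Real.exp (spinEnergy J σ)) := by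
  letI : Std.Commutative (α := Finset Λ) (· ∆ ·) := ⟨symmDiff_comm⟩
  letI : Std.Associative (α := Finset Λ) (· ∆ ·) := ⟨symmDiff_assoc⟩
  apply div_nonneg
  · -- numerator
    have key : ∀ σ : Λ → Bool,
        spinProd σ B * Real.exp (spinEnergy J σ)
          = ∑ S ∈ (univ : Finset (Finset Λ)).powerset,
              ((∏ A ∈ S, Real.sinh (J A)) * ∏ A ∈ univ \ S, Real.cosh (J A))
                * spinProd σ (S.fold (· ∆ ·) B id) := by
      intro σ
      have hexp : Real.exp (spinEnergy J σ)
          = ∏ A : Finset Λ, (Real.sinh (J A) * spinProd σ A + Real.cosh (J A)) := by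
        rw [spinEnergy, Real.exp_sum]
        apply Finset.prod_congr rfl
        intro A _
        rcases spinProd_pm σ A with h | h
        · rw [h]; simp [Real.sinh_add_cosh]
        · rw [h]
          have h2 := Real.cosh_sub_sinh (J A)
          rw [show J A * (-1:ℝ) = -(J A) by ring, ← h2]
          ring
      rw [hexp, Finset.prod_add, Finset.mul_sum]
      apply Finset.sum_congr rfl
      intro S _
      rw [Finset.prod_mul_distrib, ← spinProd_fold σ B S]
      ring
    calc (0:ℝ) ≤ ∑ S ∈ (univ : Finset (Finset Λ)).powerset,
        ((∏ A ∈ S, Real.sinh (J A)) * ∏ A ∈ univ \ S, Real.cosh (J A))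
          * ∑ σ : Λ → Bool, spinProd σ (S.fold (· ∆ ·) B id) := by
          apply Finset.sum_nonneg
          intro S _
          apply mul_nonneg
          · apply mul_nonneg
            · exact Finset.prod_nonneg fun A _ => Real.sinh_nonneg_iff.mpr (hJ A)
            · exact Finset.prod_nonneg fun A _ => (Real.cosh_pos _).le
          · exact sum_spinProd_nonneg _
      _ = ∑ σ : Λ → Bool, spinProd σ B * Real.exp (spinEnergy J σ) := by
          simp_rw [Finset.mul_sum]
          rw [Finset.sum_comm]
          exact Finset.sum_congr rfl fun σ _ => (key σ).symm
  · exact Finset.sum_nonneg fun σ _ => (Real.exp_pos _).le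
end

section
/- Griffiths' second inequality for a finite Z(2) spin system: with the setup of Griffiths' first inequality (all couplings J_A ≥ 0), for any two subsets A, B ⊆ Λ one has ⟨σ_A σ_B⟩ ≥ ⟨σ_A⟩⟨σ_B⟩. Consequently ⟨σ_B⟩ is monotone nondecreasing in each coupling J_A. -/
open Finset

/-- The Gibbs expectation ⟨f⟩ with weight exp(∑_A J_A σ_A). -/
noncomputable def gibbsExp {Λ : Type*} [Fintype Λ] [DecidableEq Λ]
    (J : Finset Λ → ℝ) (f : (Λ → Bool) → ℝ) : ℝ :=
  (∑ σ : Λ → Bool, f σ * Real.exp (spinEnergy J σ)) /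
    (∑ σ : Λ → Bool, Real.exp (spinEnergy J σ))

namespace GriffithsAux

/-- The value ±1 of a single spin. -/
def eps (b : Bool) : ℝ := if b then 1 else -1

variable {Λ : Type*}

lemma spinProd_def (σ : Λ → Bool) (A : Finset Λ) : spinProd σ A = ∏ i ∈ A, eps (σ i) := rfl

lemma eps_mul (a b : Bool) : eps (a == b) = eps a * eps b := by
  cases a <;> cases b <;> simp [eps]

lemma spinProd_eq_one_or (σ : Λ → Bool) (A : Finset Λ) :
    spinProd σ A = 1 ∨ spinProd σ A = -1 := by
  classical
  induction A using Finset.induction_on with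
  | empty => left; simp [spinProd]
  | @insert a s ha ih =>
    rw [spinProd_def, Finset.prod_insert ha, ← spinProd_def]
    rcases ih with h1 | h1 <;> rcases Bool.dichotomy (σ a) with h2 | h2 <;>
      rw [h1, h2] <;> simp [eps]

lemma spinProd_le_one (σ : Λ → Bool) (A : Finset Λ) : spinProd σ A ≤ 1 := by
  rcases spinProd_eq_one_or σ A with h | h <;> rw [h] <;> norm_num

lemma neg_one_le_spinProd (σ : Λ → Bool) (A : Finset Λ) : -1 ≤ spinProd σ A := by
  rcases spinProd_eq_one_or σ A with h | h <;> rw [h] <;> norm_num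

lemma spinProd_combine (σ t : Λ → Bool) (C : Finset Λ) :
    spinProd (fun i => σ i == t i) C = spinProd σ C * spinProd t C := by
  rw [spinProd_def, spinProd_def, spinProd_def, ← Finset.prod_mul_distrib]
  exact Finset.prod_congr rfl fun i _ => eps_mul _ _

lemma core_pow [Fintype Λ] [DecidableEq Λ] (m : Λ → ℕ) :
    0 ≤ ∑ σ : Λ → Bool, ∏ i, eps (σ i) ^ m i := by
  rw [← Fintype.prod_sum (fun i (b : Bool) => eps b ^ m i)]
  refine Finset.prod_nonneg fun i _ => ?_
  have : ∑ b : Bool, eps b ^ m i = 1 + (-1 : ℝ) ^ m i := by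
    simp [eps]
  rw [this]
  rcases Nat.even_or_odd (m i) with h | h
  · rw [h.neg_one_pow]; norm_num
  · rw [h.neg_one_pow]; norm_num

lemma spinProd_pow [Fintype Λ] [DecidableEq Λ] (σ : Λ → Bool) (S : Finset Λ) :
    spinProd σ S = ∏ i, eps (σ i) ^ (if i ∈ S then 1 else 0) := by
  have h1 : ∀ i, eps (σ i) ^ (if i ∈ S then 1 else 0)
      = (if i ∈ S then eps (σ i) else 1) := fun i => by split_ifs <;> simp
  simp_rw [h1, Finset.prod_ite_mem, Finset.univ_inter, spinProd_def]

/-- Griffiths' first inequality (core form): with nonnegative couplings, the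
unnormalized correlation is nonnegative. -/
lemma core3 [Fintype Λ] [DecidableEq Λ] (K : Finset Λ → ℝ) (hK : ∀ C, 0 ≤ K C)
    (A B : Finset Λ) :
    0 ≤ ∑ σ : Λ → Bool, spinProd σ A * spinProd σ B * Real.exp (spinEnergy K σ) := by
  have hexp : ∀ σ : Λ → Bool, Real.exp (spinEnergy K σ)
      = ∑ t : Finset (Finset Λ),
          (∏ C ∈ t, spinProd σ C * Real.sinh (K C)) * ∏ C ∈ tᶜ, Real.cosh (K C) := by
    intro σ
    rw [← Fintype.prod_add, spinEnergy, Real.exp_sum]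
    refine Finset.prod_congr rfl fun C _ => ?_
    rcases spinProd_eq_one_or σ C with h | h <;> rw [h]
    · rw [mul_one, one_mul, add_comm, Real.cosh_add_sinh]
    · rw [mul_neg_one, neg_one_mul, ← sub_eq_neg_add, ← Real.cosh_sub_sinh]
  have key : ∀ (t : Finset (Finset Λ)) (σ : Λ → Bool),
      spinProd σ A * spinProd σ B * ∏ C ∈ t, spinProd σ C
        = ∏ i, eps (σ i) ^ ((if i ∈ A then 1 else 0) + (if i ∈ B then 1 else 0)
            + ∑ C ∈ t, (if i ∈ C then 1 else 0)) := by
    intro t σ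
    have h3 : ∏ C ∈ t, spinProd σ C
        = ∏ i, eps (σ i) ^ (∑ C ∈ t, (if i ∈ C then 1 else 0)) := by
      simp_rw [spinProd_pow, ← Finset.prod_pow_eq_pow_sum]
      rw [Finset.prod_comm]
    rw [spinProd_pow σ A, spinProd_pow σ B, h3, ← Finset.prod_mul_distrib,
      ← Finset.prod_mul_distrib]
    exact Finset.prod_congr rfl fun i _ => by rw [← pow_add, ← pow_add]
  calc (0:ℝ) ≤ ∑ t : Finset (Finset Λ),
      ((∏ C ∈ t, Real.sinh (K C)) * ∏ C ∈ tᶜ, Real.cosh (K C))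
        * ∑ σ : Λ → Bool, ∏ i, eps (σ i) ^ ((if i ∈ A then 1 else 0)
            + (if i ∈ B then 1 else 0) + ∑ C ∈ t, (if i ∈ C then 1 else 0)) := by
        refine Finset.sum_nonneg fun t _ => mul_nonneg (mul_nonneg ?_ ?_) (core_pow _)
        · exact Finset.prod_nonneg fun C _ => Real.sinh_nonneg_iff.mpr (hK C)
        · exact Finset.prod_nonneg fun C _ => (Real.cosh_pos _).le
    _ = ∑ σ : Λ → Bool, spinProd σ A * spinProd σ B * Real.exp (spinEnergy K σ) := by
        simp_rw [hexp, Finset.mul_sum]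
        rw [Finset.sum_comm]
        refine Finset.sum_congr rfl fun σ _ => Finset.sum_congr rfl fun t _ => ?_
        rw [← key t σ, Finset.prod_mul_distrib]
        ring

/-- The doubled-system master inequality. -/
lemma masterM [Fintype Λ] [DecidableEq Λ] (J1 J2 : Finset Λ → ℝ)
    (h2 : ∀ C, 0 ≤ J2 C) (h12 : ∀ C, J2 C ≤ J1 C) (A B : Finset Λ) :
    0 ≤ ∑ σ : Λ → Bool, ∑ τ : Λ → Bool,
      spinProd σ A * (spinProd σ B - spinProd τ B) *
        Real.exp (spinEnergy J1 σ + spinEnergy J2 τ) := by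
  have hbij : ∀ σ : Λ → Bool,
      Function.Bijective (fun t : Λ → Bool => fun i => σ i == t i) := by
    intro σ
    apply Function.Involutive.bijective
    intro t; funext i
    show (σ i == (σ i == t i)) = t i
    cases σ i <;> cases t i <;> rfl
  have hre : ∀ σ : Λ → Bool,
      (∑ τ : Λ → Bool, spinProd σ A * (spinProd σ B - spinProd τ B) *
          Real.exp (spinEnergy J1 σ + spinEnergy J2 τ))
      = ∑ t : Λ → Bool, (1 - spinProd t B) *
          (spinProd σ A * spinProd σ B *
            Real.exp (spinEnergy (fun C => J1 C + J2 C * spinProd t C) σ)) := by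
    intro σ
    rw [← (hbij σ).sum_comp (fun τ => spinProd σ A * (spinProd σ B - spinProd τ B) *
          Real.exp (spinEnergy J1 σ + spinEnergy J2 τ))]
    refine Finset.sum_congr rfl fun t _ => ?_
    have hE : spinEnergy J1 σ + spinEnergy J2 (fun i => σ i == t i)
        = spinEnergy (fun C => J1 C + J2 C * spinProd t C) σ := by
      unfold spinEnergy
      rw [← Finset.sum_add_distrib]
      refine Finset.sum_congr rfl fun C _ => ?_
      rw [spinProd_combine]
      ring
    rw [hE, spinProd_combine]
    ring
  simp_rw [hre]
  rw [Finset.sum_comm]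
  refine Finset.sum_nonneg fun t _ => ?_
  rw [← Finset.mul_sum]
  refine mul_nonneg (by linarith [spinProd_le_one t B]) (core3 _ ?_ A B)
  intro C
  rcases spinProd_eq_one_or t C with h | h <;> rw [h]
  · have := h2 C; have := h12 C; linarith
  · have := h12 C; linarith

lemma partition_pos [Fintype Λ] [DecidableEq Λ] (J : Finset Λ → ℝ) :
    0 < ∑ σ : Λ → Bool, Real.exp (spinEnergy J σ) :=
  Finset.sum_pos (fun σ _ => Real.exp_pos _) Finset.univ_nonempty

end GriffithsAux

open GriffithsAux in
/-- Griffiths' second inequality: with all couplings J_A ≥ 0,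
⟨σ_A σ_B⟩ ≥ ⟨σ_A⟩⟨σ_B⟩; consequently ⟨σ_B⟩ is monotone nondecreasing in the
couplings. -/
theorem griffiths_second {Λ : Type*} [Fintype Λ] [DecidableEq Λ]
    (J : Finset Λ → ℝ) (hJ : ∀ A, 0 ≤ J A) (A B : Finset Λ) :
    gibbsExp J (fun σ => spinProd σ A) * gibbsExp J (fun σ => spinProd σ B) ≤
      gibbsExp J (fun σ => spinProd σ A * spinProd σ B) ∧
    (∀ J' : Finset Λ → ℝ, (∀ A', 0 ≤ J' A') → (∀ A', J' A' ≤ J A') →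
      gibbsExp J' (fun σ => spinProd σ B) ≤ gibbsExp J (fun σ => spinProd σ B)) := by
  have hZ := partition_pos (Λ := Λ) J
  constructor
  · unfold gibbsExp
    rw [div_mul_div_comm, div_le_div_iff₀ (by positivity) hZ]
    have expand :
        (∑ σ : Λ → Bool, spinProd σ A * spinProd σ B * Real.exp (spinEnergy J σ)) *
            (∑ τ : Λ → Bool, Real.exp (spinEnergy J τ))
          - (∑ σ : Λ → Bool, spinProd σ A * Real.exp (spinEnergy J σ)) *
            (∑ τ : Λ → Bool, spinProd τ B * Real.exp (spinEnergy J τ))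
        = ∑ σ : Λ → Bool, ∑ τ : Λ → Bool,
            spinProd σ A * (spinProd σ B - spinProd τ B) *
              Real.exp (spinEnergy J σ + spinEnergy J τ) := by
      rw [Finset.sum_mul_sum, Finset.sum_mul_sum, ← Finset.sum_sub_distrib]
      refine Finset.sum_congr rfl fun σ _ => ?_
      rw [← Finset.sum_sub_distrib]
      refine Finset.sum_congr rfl fun τ _ => ?_
      rw [Real.exp_add]
      ring
    nlinarith [masterM J J hJ (fun C => le_refl (J C)) A B, expand, hZ]
  · intro J' hJ'0 hJ'le
    unfold gibbsExp
    rw [div_le_div_iff₀ (partition_pos J') hZ]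
    have expand :
        (∑ σ : Λ → Bool, spinProd σ B * Real.exp (spinEnergy J σ)) *
            (∑ τ : Λ → Bool, Real.exp (spinEnergy J' τ))
          - (∑ σ : Λ → Bool, spinProd σ B * Real.exp (spinEnergy J' σ)) *
            (∑ τ : Λ → Bool, Real.exp (spinEnergy J τ))
        = ∑ σ : Λ → Bool, ∑ τ : Λ → Bool,
            spinProd σ ∅ * (spinProd σ B - spinProd τ B) *
              Real.exp (spinEnergy J σ + spinEnergy J' τ) := by
      have hY : (∑ σ : Λ → Bool, spinProd σ B * Real.exp (spinEnergy J' σ)) *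
            (∑ τ : Λ → Bool, Real.exp (spinEnergy J τ))
          = ∑ σ : Λ → Bool, ∑ τ : Λ → Bool,
              spinProd τ B * Real.exp (spinEnergy J σ) * Real.exp (spinEnergy J' τ) := by
        rw [Finset.sum_mul_sum, Finset.sum_comm]
        exact Finset.sum_congr rfl fun σ _ => Finset.sum_congr rfl fun τ _ => by ring
      rw [Finset.sum_mul_sum, hY, ← Finset.sum_sub_distrib]
      refine Finset.sum_congr rfl fun σ _ => ?_
      rw [← Finset.sum_sub_distrib]
      refine Finset.sum_congr rfl fun τ _ => ?_
      rw [Real.exp_add]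
      simp only [spinProd, Finset.prod_empty]
      ring
    nlinarith [masterM J J' hJ'0 hJ'le ∅ B, expand, partition_pos J', hZ]
end
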